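/- For any λ ∈ K^{d+1}, the K-linear map φ̄^λ : D̄_E ⊗ D̄_V → D̄_E ⊗ D̄_V defined on basis vectors by: φ̄^λ(a ⊗ b) = φ^λ(a ⊗ b) for a, b ∈ ℕ^{d+1}, φ̄^λ(a ⊗ ★) = 0 for a ∈ ℕ^{d+1}, φ̄^λ(Ξ ⊗ b) = Ξ ⊗ b for b ∈ ℕ^{d+1}, and φ̄^λ(Ξ ⊗ ★) = 0, is tree-compatible (with edge space D̄_E and vertex space D̄_V). -/

import Mathlib

open TensorProduct

/-- The endomorphism `φ₁₃ = (τ ⊗ id) ∘ (id ⊗ φ) ∘ (τ ⊗ id)` of `D_E ⊗ D_E ⊗ D_V`,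
where `τ` is the flip of the first two factors. -/
noncomputable def phi13 (K : Type*) [CommSemiring K] (E V : Type*)
    [AddCommMonoid E] [Module K E] [AddCommMonoid V] [Module K V]
    (φ : TensorProduct K E V →ₗ[K] TensorProduct K E V) :
    TensorProduct K E (TensorProduct K E V) →ₗ[K] TensorProduct K E (TensorProduct K E V) :=
  (TensorProduct.leftComm K E E V).toLinearMap ∘ₗ LinearMap.lTensor E φ ∘ₗ
    (TensorProduct.leftComm K E E V).toLinearMap

/-- `φ` is tree-compatible if `φ₁₃ ∘ φ₂₃ = φ₂₃ ∘ φ₁₃`, where `φ₂₃ = id ⊗ φ`. -/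
noncomputable def TreeCompatible (K : Type*) [CommSemiring K] (E V : Type*)
    [AddCommMonoid E] [Module K E] [AddCommMonoid V] [Module K V]
    (φ : TensorProduct K E V →ₗ[K] TensorProduct K E V) : Prop :=
  phi13 K E V φ ∘ₗ LinearMap.lTensor E φ = LinearMap.lTensor E φ ∘ₗ phi13 K E V φ

/-! On `a ⊗ a' ⊗ b` with `a, a', b ∈ ℕ^{d+1}` both composites expand into the double sum over
`l ≤ a`, `m ≤ a'` of `λ^(l+m)` times `binom(b,l) binom(b-l,m)`, resp. `binom(b,m) binom(b-m,l)`,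
times `(a-l) ⊗ (a'-m) ⊗ (b-l-m)`; the two products of binomials are both the trinomial coefficient
`b! / (l! m! (b-l-m)!)` (and both vanish unless `l + m ≤ b`), so the sums agree after exchanging
the order of summation. The other basis vectors are routine: `φ̄` kills everything ending in `★`
and fixes `Ξ ⊗ b`. -/

open Finset

theorem Nat.choose_mul_choose_sub_comm (n l m : ℕ) :
    n.choose l * (n - l).choose m = n.choose m * (n - m).choose l := by
  have hl := Nat.choose_mul (n := n) (Nat.le_add_right l m)
  have hm := Nat.choose_mul (n := n) (Nat.le_add_left m l)
  simp only [Nat.add_sub_cancel_left, Nat.add_sub_cancel] at hl hm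
  rw [← hl, ← hm, Nat.choose_symm_add]

section Coefficient

variable {K : Type*} [CommSemiring K] {ι : Type*} [Fintype ι]

/-- The coefficient of `(a - l) ⊗ (b - l)` in `φ^λ(a ⊗ b)`. -/
def shiftCoeff (lam : ι → K) (b l : ι → ℕ) : K :=
  (∏ i, lam i ^ l i) * ∏ i, ((b i).choose (l i) : K)

theorem shiftCoeff_mul_shiftCoeff_sub_comm (lam : ι → K) (b l m : ι → ℕ) :
    shiftCoeff lam b l * shiftCoeff lam (b - l) m =
      shiftCoeff lam b m * shiftCoeff lam (b - m) l := by
  have hchoose : ∀ i, ((b i).choose (l i) : K) * ((b - l) i).choose (m i) =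
      ((b i).choose (m i) : K) * ((b - m) i).choose (l i) := fun i => by
    exact_mod_cast congrArg (Nat.cast : ℕ → K) (Nat.choose_mul_choose_sub_comm (b i) (l i) (m i))
  calc shiftCoeff lam b l * shiftCoeff lam (b - l) m
      = (∏ i, lam i ^ l i) * (∏ i, lam i ^ m i) *
          ∏ i, ((b i).choose (l i) : K) * ((b - l) i).choose (m i) := by
        rw [shiftCoeff, shiftCoeff, prod_mul_distrib]; ring
    _ = (∏ i, lam i ^ m i) * (∏ i, lam i ^ l i) *
          ∏ i, ((b i).choose (m i) : K) * ((b - m) i).choose (l i) := by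
        rw [prod_congr rfl fun i _ => hchoose i]; ring
    _ = shiftCoeff lam b m * shiftCoeff lam (b - m) l := by
        rw [shiftCoeff, shiftCoeff, prod_mul_distrib]; ring

end Coefficient

/-- Both sides run over the pairs `(l, m)` with `l ≤ a`, `m ≤ a'` and `l + m ≤ b`. -/
theorem sum_Iic_min_sum_Iic_min_comm {ι M : Type*} [Fintype ι] [DecidableEq ι]
    [AddCommMonoid M] (a a' b : ι → ℕ) (f : (ι → ℕ) → (ι → ℕ) → M) :
    ∑ l ∈ Iic (fun i => min (a i) (b i)), ∑ m ∈ Iic (fun i => min (a' i) ((b - l) i)), f l m =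
      ∑ m ∈ Iic (fun i => min (a' i) (b i)),
        ∑ l ∈ Iic (fun i => min (a i) ((b - m) i)), f l m := by
  refine sum_comm' fun l m => ?_
  simp only [mem_Iic, Pi.le_def, Pi.sub_apply]
  constructor <;>
  · rintro ⟨h₁, h₂⟩
    exact ⟨fun i => by have := h₁ i; have := h₂ i; omega,
      fun i => by have := h₁ i; have := h₂ i; omega⟩

section TreeCompatible

variable {K : Type*} [CommSemiring K] {E V : Type*} [AddCommMonoid E] [Module K E]
  [AddCommMonoid V] [Module K V]

theorem phi13_tmul_tmul (φ : E ⊗[K] V →ₗ[K] E ⊗[K] V) (u w : E) (v : V) :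
    phi13 K E V φ (u ⊗ₜ (w ⊗ₜ v)) = leftComm K E E V (w ⊗ₜ φ (u ⊗ₜ v)) := by
  simp [phi13, leftComm_tmul]

theorem treeCompatible_of_basis {σ τ : Type*} (eE : Module.Basis σ K E)
    (eV : Module.Basis τ K V) (φ : E ⊗[K] V →ₗ[K] E ⊗[K] V)
    (h : ∀ x y b, phi13 K E V φ (eE x ⊗ₜ φ (eE y ⊗ₜ eV b)) =
      φ.lTensor E (leftComm K E E V (eE y ⊗ₜ φ (eE x ⊗ₜ eV b)))) :
    TreeCompatible K E V φ :=
  (eE.tensorProduct (eE.tensorProduct eV)).ext fun ⟨x, y, b⟩ => by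
    simpa only [TreeCompatible, Module.Basis.tensorProduct_apply, LinearMap.comp_apply,
      LinearMap.lTensor_tmul, phi13_tmul_tmul] using h x y b

end TreeCompatible

section Shift

variable {K : Type*} [CommSemiring K] {E V : Type*} [AddCommMonoid E] [Module K E]
  [AddCommMonoid V] [Module K V] {ι : Type*} [Fintype ι] [DecidableEq ι]

theorem phi13_tmul_eq_lTensor_leftComm_of_shift (lam : ι → K) (x : (ι → ℕ) → E)
    (y : (ι → ℕ) → V) (φ : E ⊗[K] V →ₗ[K] E ⊗[K] V)
    (hφ : ∀ a b, φ (x a ⊗ₜ y b) = ∑ l ∈ Iic (fun i => min (a i) (b i)),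
      shiftCoeff lam b l • (x (a - l) ⊗ₜ[K] y (b - l)))
    (a a' b : ι → ℕ) :
    phi13 K E V φ (x a ⊗ₜ φ (x a' ⊗ₜ y b)) =
      φ.lTensor E (leftComm K E E V (x a' ⊗ₜ φ (x a ⊗ₜ y b))) := by
  simp only [hφ, tmul_sum, tmul_smul, map_sum, map_smul,
    phi13_tmul_tmul, leftComm_tmul, LinearMap.lTensor_tmul, smul_sum, smul_smul]
  rw [sum_Iic_min_sum_Iic_min_comm]
  refine sum_congr rfl fun m hm => sum_congr rfl fun l hl => ?_
  simp only [mem_Iic, Pi.le_def, Pi.sub_apply] at hm hl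
  have hsub : b - l - m = b - m - l := by funext i; simp only [Pi.sub_apply]; omega
  rw [hsub, shiftCoeff_mul_shiftCoeff_sub_comm]

end Shift

/-- `Eb` and `Vb` come with bases indexed by `(Fin (d + 1) → ℕ) ⊕ Unit`, where `Sum.inr ()`
stands for `Ξ` and for `★` respectively. -/
theorem phi_bar_treeCompatible_general (K : Type*) [Field K] (d : ℕ)
    (Eb : Type*) [AddCommGroup Eb] [Module K Eb]
    (Vb : Type*) [AddCommGroup Vb] [Module K Vb]
    (eE : Module.Basis ((Fin (d + 1) → ℕ) ⊕ Unit) K Eb)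
    (eV : Module.Basis ((Fin (d + 1) → ℕ) ⊕ Unit) K Vb)
    (lam : Fin (d + 1) → K)
    (φ : TensorProduct K Eb Vb →ₗ[K] TensorProduct K Eb Vb)
    (hφ₁ : ∀ a b : Fin (d + 1) → ℕ,
      φ (eE (Sum.inl a) ⊗ₜ eV (Sum.inl b)) =
        ∑ l ∈ Finset.Iic (fun i => min (a i) (b i)),
          ((∏ i, lam i ^ l i) * ∏ i, ((b i).choose (l i) : K)) •
            (eE (Sum.inl (a - l)) ⊗ₜ[K] eV (Sum.inl (b - l))))
    (hφ₂ : ∀ a : Fin (d + 1) → ℕ, φ (eE (Sum.inl a) ⊗ₜ eV (Sum.inr ())) = 0)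
    (hφ₃ : ∀ b : Fin (d + 1) → ℕ,
      φ (eE (Sum.inr ()) ⊗ₜ eV (Sum.inl b)) = eE (Sum.inr ()) ⊗ₜ[K] eV (Sum.inl b))
    (hφ₄ : φ (eE (Sum.inr ()) ⊗ₜ eV (Sum.inr ())) = 0) :
    TreeCompatible K Eb Vb φ := by
  have hstar : ∀ x, φ (eE x ⊗ₜ eV (Sum.inr ())) = 0 := by
    rintro (a | ⟨⟩)
    exacts [hφ₂ a, hφ₄]
  refine treeCompatible_of_basis eE eV φ ?_
  rintro x y (b | ⟨⟩)
  · rcases x with a | ⟨⟩ <;> rcases y with a' | ⟨⟩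
    · exact phi13_tmul_eq_lTensor_leftComm_of_shift lam _ _ φ hφ₁ a a' b
    all_goals simp only [hφ₁, hφ₃, phi13_tmul_tmul, tmul_sum, tmul_smul, map_sum, map_smul,
      leftComm_tmul, LinearMap.lTensor_tmul]
  · simp only [hstar, tmul_zero, map_zero]

/-- The extension `φ̄^λ` of `φ^λ` to the spaces `D̄_E` and `D̄_V` obtained by adding the
extra symbols `Ξ` (on edges) and `★` (on vertices) is tree-compatible.  Here `Eb` (resp.
`Vb`) is the free `K`-vector space on `ℕ^{d+1} ⊔ {Ξ}` (resp. `ℕ^{d+1} ⊔ {★}`), given by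
a basis indexed by `(Fin (d+1) → ℕ) ⊕ Unit`, the extra symbol being `Sum.inr ()`. -/
theorem phi_bar_treeCompatible (K : Type*) [Field K] [CharZero K] (d : ℕ)
    (Eb : Type*) [AddCommGroup Eb] [Module K Eb]
    (Vb : Type*) [AddCommGroup Vb] [Module K Vb]
    (eE : Module.Basis ((Fin (d + 1) → ℕ) ⊕ Unit) K Eb)
    (eV : Module.Basis ((Fin (d + 1) → ℕ) ⊕ Unit) K Vb)
    (lam : Fin (d + 1) → K)
    (φ : TensorProduct K Eb Vb →ₗ[K] TensorProduct K Eb Vb)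
    (hφ₁ : ∀ a b : Fin (d + 1) → ℕ,
      φ (eE (Sum.inl a) ⊗ₜ eV (Sum.inl b)) =
        ∑ l ∈ Finset.Iic (fun i => min (a i) (b i)),
          ((∏ i, lam i ^ l i) * ∏ i, ((b i).choose (l i) : K)) •
            (eE (Sum.inl (a - l)) ⊗ₜ[K] eV (Sum.inl (b - l))))
    (hφ₂ : ∀ a : Fin (d + 1) → ℕ, φ (eE (Sum.inl a) ⊗ₜ eV (Sum.inr ())) = 0)
    (hφ₃ : ∀ b : Fin (d + 1) → ℕ,
      φ (eE (Sum.inr ()) ⊗ₜ eV (Sum.inl b)) = eE (Sum.inr ()) ⊗ₜ[K] eV (Sum.inl b))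
    (hφ₄ : φ (eE (Sum.inr ()) ⊗ₜ eV (Sum.inr ())) = 0) :
    TreeCompatible K Eb Vb φ :=
  phi_bar_treeCompatible_general K d Eb Vb eE eV lam φ hφ₁ hφ₂ hφ₃ hφ₄
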